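/- arXiv:2511.19708 — 5 statements merged into one kernel-verified Lean document; each statement's English description precedes it below -/
import Mathlib

section
/- Stability of minimizers of perturbed Lagrangians: if x₁ minimizes x ↦ F(x) + ⟨μ₁, Bx⟩ + ⟨δ₁, h(x)⟩ and x₂ minimizes x ↦ F(x) + ⟨μ₂, Bx⟩ + ⟨δ₂, h(x)⟩, where F is μ_f-strongly convex, each coordinate of h is convex, and h is l_h-Lipschitz, then ‖x₂ - x₁‖ ≤ (‖B‖/μ_f)‖μ₁ - μ₂‖ + (l_h/μ_f)‖δ₁ - δ₂‖. -/
open RealInnerProductSpace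

/-- Quadratic growth at a global minimizer of a strongly convex function. -/
lemma growth_aux {E : Type*} [NormedAddCommGroup E] [InnerProductSpace ℝ E]
    {c : ℝ} (hc : 0 < c) {L : E → ℝ}
    (hL : ConvexOn ℝ Set.univ (fun x => L x - c / 2 * ‖x‖ ^ 2))
    {x₀ : E} (hx₀ : ∀ x, L x₀ ≤ L x) (x : E) :
    L x₀ + c / 2 * ‖x - x₀‖ ^ 2 ≤ L x := by
  have key : ∀ t ∈ Set.Ioo (0 : ℝ) 1,
      c / 2 * (1 - t) * ‖x - x₀‖ ^ 2 ≤ L x - L x₀ := by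
    intro t ht
    have ha : (0:ℝ) ≤ 1 - t := by linarith [ht.2]
    have hb : (0:ℝ) ≤ t := le_of_lt ht.1
    have hcv := hL.2 (Set.mem_univ x₀) (Set.mem_univ x) ha hb (by ring)
    simp only at hcv
    have hmin := hx₀ ((1 - t) • x₀ + t • x)
    have hid : (1 - t) * ‖x₀‖ ^ 2 + t * ‖x‖ ^ 2 - ‖(1 - t) • x₀ + t • x‖ ^ 2
        = (1 - t) * t * ‖x - x₀‖ ^ 2 := by
      have e1 : ‖(1 - t) • x₀ + t • x‖ ^ 2 = ⟪(1 - t) • x₀ + t • x, (1 - t) • x₀ + t • x⟫ :=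
        (real_inner_self_eq_norm_sq _).symm
      have e2 : ‖x - x₀‖ ^ 2 = ⟪x - x₀, x - x₀⟫ := (real_inner_self_eq_norm_sq _).symm
      have e3 : ‖x₀‖ ^ 2 = ⟪x₀, x₀⟫ := (real_inner_self_eq_norm_sq _).symm
      have e4 : ‖x‖ ^ 2 = ⟪x, x⟫ := (real_inner_self_eq_norm_sq _).symm
      rw [e1, e2, e3, e4]
      simp only [inner_add_add_self, inner_sub_sub_self, real_inner_smul_left,
        real_inner_smul_right, real_inner_comm x₀ x]
      ring
    simp only [smul_eq_mul] at hcv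
    have h1 : t * (c / 2 * (1 - t) * ‖x - x₀‖ ^ 2) ≤ t * (L x - L x₀) := by
      nlinarith [hmin, hcv, hid, hc]
    exact le_of_mul_le_mul_left h1 ht.1
  have htend : Filter.Tendsto (fun t : ℝ => c / 2 * (1 - t) * ‖x - x₀‖ ^ 2)
      (nhdsWithin 0 (Set.Ioo 0 1)) (nhds (c / 2 * (1 - 0) * ‖x - x₀‖ ^ 2)) := by
    apply Filter.Tendsto.mono_left _ nhdsWithin_le_nhds
    exact Continuous.tendsto (by continuity) 0
  have hne : Filter.NeBot (nhdsWithin (0:ℝ) (Set.Ioo 0 1)) := by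
    apply mem_closure_iff_nhdsWithin_neBot.mp
    rw [closure_Ioo (by norm_num : (0:ℝ) ≠ 1)]
    exact ⟨le_refl 0, by norm_num⟩
  have := le_of_tendsto htend
    (Filter.eventually_of_mem self_mem_nhdsWithin key)
  simpa using by linarith [this]

theorem stmt2 {p d m : ℕ} (μf lh : ℝ) (hμf : 0 < μf) (hlh : 0 ≤ lh)
    (F : EuclideanSpace ℝ (Fin p) → ℝ)
    (hF : ConvexOn ℝ Set.univ (fun x => F x - μf / 2 * ‖x‖ ^ 2))
    (B : EuclideanSpace ℝ (Fin p) →L[ℝ] EuclideanSpace ℝ (Fin d))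
    (h : EuclideanSpace ℝ (Fin p) → EuclideanSpace ℝ (Fin m))
    (hconv : ∀ j, ConvexOn ℝ Set.univ (fun x => h x j))
    (hlip : LipschitzWith (Real.toNNReal lh) h)
    (μ₁ μ₂ : EuclideanSpace ℝ (Fin d)) (δ₁ δ₂ : EuclideanSpace ℝ (Fin m))
    (hδ₁ : ∀ j, 0 ≤ δ₁ j) (hδ₂ : ∀ j, 0 ≤ δ₂ j)
    (x₁ x₂ : EuclideanSpace ℝ (Fin p))
    (hx₁ : ∀ x, F x₁ + ⟪μ₁, B x₁⟫ + ⟪δ₁, h x₁⟫ ≤ F x + ⟪μ₁, B x⟫ + ⟪δ₁, h x⟫)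
    (hx₂ : ∀ x, F x₂ + ⟪μ₂, B x₂⟫ + ⟪δ₂, h x₂⟫ ≤ F x + ⟪μ₂, B x⟫ + ⟪δ₂, h x⟫) :
    ‖x₂ - x₁‖ ≤ ‖B‖ / μf * ‖μ₁ - μ₂‖ + lh / μf * ‖δ₁ - δ₂‖ := by
  -- convexity of the linear part
  have linconv : ∀ μ : EuclideanSpace ℝ (Fin d),
      ConvexOn ℝ Set.univ (fun x => ⟪μ, B x⟫) := by
    intro μ
    refine ⟨convex_univ, fun x _ y _ a b ha hb hab => le_of_eq ?_⟩
    simp only [map_add, map_smul, inner_add_right, real_inner_smul_right, smul_eq_mul]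
  -- convexity of the ⟨δ, h x⟩ part
  have innerconv : ∀ δ : EuclideanSpace ℝ (Fin m), (∀ j, 0 ≤ δ j) →
      ConvexOn ℝ Set.univ (fun x => ⟪δ, h x⟫) := by
    intro δ hδ
    refine ⟨convex_univ, fun x _ y _ a b ha hb hab => ?_⟩
    simp only [PiLp.inner_apply, RCLike.inner_apply, conj_trivial]
    simp only [smul_eq_mul, mul_comm _ (δ _)]
    calc ∑ j, δ j * h (a • x + b • y) j
        ≤ ∑ j, δ j * (a * h x j + b * h y j) := by
          refine Finset.sum_le_sum fun j _ => ?_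
          exact mul_le_mul_of_nonneg_left
            ((hconv j).2 (Set.mem_univ x) (Set.mem_univ y) ha hb hab) (hδ j)
      _ = a * ∑ j, δ j * h x j + b * ∑ j, δ j * h y j := by
          rw [Finset.mul_sum, Finset.mul_sum, ← Finset.sum_add_distrib]
          congr 1; funext j; ring
  -- strong convexity of the Lagrangians
  have lagconv : ∀ (μ : EuclideanSpace ℝ (Fin d)) (δ : EuclideanSpace ℝ (Fin m)),
      (∀ j, 0 ≤ δ j) →
      ConvexOn ℝ Set.univ
        (fun x => (F x + ⟪μ, B x⟫ + ⟪δ, h x⟫) - μf / 2 * ‖x‖ ^ 2) := by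
    intro μ δ hδ
    have heq : (fun x => (F x + ⟪μ, B x⟫ + ⟪δ, h x⟫) - μf / 2 * ‖x‖ ^ 2)
        = ((fun x => F x - μf / 2 * ‖x‖ ^ 2) + fun x => ⟪μ, B x⟫) + fun x => ⟪δ, h x⟫ := by
      funext x; simp only [Pi.add_apply]; ring
    rw [heq]
    exact (hF.add (linconv μ)).add (innerconv δ hδ)
  have g1 := growth_aux hμf (lagconv μ₁ δ₁ hδ₁) hx₁ x₂
  have g2 := growth_aux hμf (lagconv μ₂ δ₂ hδ₂) hx₂ x₁
  rw [show ‖x₁ - x₂‖ = ‖x₂ - x₁‖ from norm_sub_rev _ _] at g2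
  -- bound the cross terms
  have hB : ⟪μ₁ - μ₂, B x₂ - B x₁⟫ ≤ ‖μ₁ - μ₂‖ * (‖B‖ * ‖x₂ - x₁‖) := by
    calc ⟪μ₁ - μ₂, B x₂ - B x₁⟫ ≤ ‖μ₁ - μ₂‖ * ‖B x₂ - B x₁‖ := real_inner_le_norm _ _
      _ ≤ ‖μ₁ - μ₂‖ * (‖B‖ * ‖x₂ - x₁‖) := by
          apply mul_le_mul_of_nonneg_left _ (norm_nonneg _)
          rw [← map_sub]
          exact B.le_opNorm _
  have hH : ⟪δ₁ - δ₂, h x₂ - h x₁⟫ ≤ ‖δ₁ - δ₂‖ * (lh * ‖x₂ - x₁‖) := by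
    calc ⟪δ₁ - δ₂, h x₂ - h x₁⟫ ≤ ‖δ₁ - δ₂‖ * ‖h x₂ - h x₁‖ := real_inner_le_norm _ _
      _ ≤ ‖δ₁ - δ₂‖ * (lh * ‖x₂ - x₁‖) := by
          apply mul_le_mul_of_nonneg_left _ (norm_nonneg _)
          have := hlip.dist_le_mul x₂ x₁
          rw [dist_eq_norm, dist_eq_norm] at this
          calc ‖h x₂ - h x₁‖ ≤ (Real.toNNReal lh : ℝ) * ‖x₂ - x₁‖ := this
            _ = lh * ‖x₂ - x₁‖ := by rw [Real.coe_toNNReal lh hlh]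
  -- the key inequality
  have hkey : μf * ‖x₂ - x₁‖ ^ 2
      ≤ (‖B‖ * ‖μ₁ - μ₂‖ + lh * ‖δ₁ - δ₂‖) * ‖x₂ - x₁‖ := by
    have hsum : μf * ‖x₂ - x₁‖ ^ 2
        ≤ ⟪μ₁ - μ₂, B x₂ - B x₁⟫ + ⟪δ₁ - δ₂, h x₂ - h x₁⟫ := by
      have e1 : ⟪μ₁ - μ₂, B x₂ - B x₁⟫
          = (⟪μ₁, B x₂⟫ - ⟪μ₁, B x₁⟫) - (⟪μ₂, B x₂⟫ - ⟪μ₂, B x₁⟫) := by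
        simp [inner_sub_left, inner_sub_right]; ring
      have e2 : ⟪δ₁ - δ₂, h x₂ - h x₁⟫
          = (⟪δ₁, h x₂⟫ - ⟪δ₁, h x₁⟫) - (⟪δ₂, h x₂⟫ - ⟪δ₂, h x₁⟫) := by
        simp [inner_sub_left, inner_sub_right]; ring
      rw [e1, e2]; linarith [g1, g2]
    calc μf * ‖x₂ - x₁‖ ^ 2 ≤ ⟪μ₁ - μ₂, B x₂ - B x₁⟫ + ⟪δ₁ - δ₂, h x₂ - h x₁⟫ := hsum
      _ ≤ ‖μ₁ - μ₂‖ * (‖B‖ * ‖x₂ - x₁‖) + ‖δ₁ - δ₂‖ * (lh * ‖x₂ - x₁‖) := by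
          linarith [hB, hH]
      _ = (‖B‖ * ‖μ₁ - μ₂‖ + lh * ‖δ₁ - δ₂‖) * ‖x₂ - x₁‖ := by ring
  rcases eq_or_lt_of_le (norm_nonneg (x₂ - x₁)) with hn | hn
  · rw [← hn]
    have h1 : 0 ≤ ‖B‖ / μf * ‖μ₁ - μ₂‖ := by positivity
    have h2 : 0 ≤ lh / μf * ‖δ₁ - δ₂‖ := by positivity
    linarith
  · rw [div_mul_eq_mul_div, div_mul_eq_mul_div, ← add_div, le_div_iff₀ hμf]
    have hfin : μf * ‖x₂ - x₁‖ ≤ ‖B‖ * ‖μ₁ - μ₂‖ + lh * ‖δ₁ - δ₂‖ := by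
      apply le_of_mul_le_mul_right _ hn
      calc μf * ‖x₂ - x₁‖ * ‖x₂ - x₁‖ = μf * ‖x₂ - x₁‖ ^ 2 := by ring
        _ ≤ (‖B‖ * ‖μ₁ - μ₂‖ + lh * ‖δ₁ - δ₂‖) * ‖x₂ - x₁‖ := hkey
    linarith
end

section
/- With minimizers x₁, x₂ as in the perturbed Lagrangian setting, the vector-valued map (μ,δ) ↦ (Bx(μ,δ), h(x(μ,δ))) satisfies ‖(Bx₁, h(x₁)) - (Bx₂, h(x₂))‖² ≤ (2/μ_f²)(‖B‖² + l_h²)·max{‖B‖², l_h²}·(‖μ₁-μ₂‖² + ‖δ₁-δ₂‖²), i.e., it is Lipschitz with constant l_g = sqrt((2/μ_f²)(‖B‖² + l_h²)·max{‖B‖², l_h²}). -/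
set_option maxHeartbeats 1000000

open RealInnerProductSpace

-- sum of convex functions is convex
lemma convexOn_finset_sum {E : Type*} [NormedAddCommGroup E] [NormedSpace ℝ E]
    {ι : Type*} (t : Finset ι) (f : ι → E → ℝ)
    (hf : ∀ i ∈ t, ConvexOn ℝ Set.univ (f i)) :
    ConvexOn ℝ Set.univ (fun x => ∑ i ∈ t, f i x) := by
  classical
  induction t using Finset.cons_induction with
  | empty => simpa using convexOn_const 0 convex_univ
  | cons a s ha ih =>
    simp only [Finset.sum_cons]
    exact (hf a (Finset.mem_cons_self a s)).add
      (ih fun i hi => hf i (Finset.mem_cons_of_mem hi))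

-- minimizer of strongly convex function
lemma strong_min {E : Type*} [NormedAddCommGroup E] [InnerProductSpace ℝ E]
    {m : ℝ} {L : E → ℝ} (hm : 0 < m)
    (hL : ConvexOn ℝ Set.univ (fun x => L x - m / 2 * ‖x‖ ^ 2))
    {x₀ : E} (hmin : ∀ x, L x₀ ≤ L x) (y : E) :
    L x₀ + m / 2 * ‖y - x₀‖ ^ 2 ≤ L y := by
  have hsc : StrongConvexOn Set.univ m L := strongConvexOn_iff_convex.2 hL
  have key : ∀ b : ℝ, 0 < b → b ≤ 1 →
      L x₀ + m / 2 * (1 - b) * ‖x₀ - y‖ ^ 2 ≤ L y := by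
    intro b hb hb1
    have h2 := hsc.2 (Set.mem_univ x₀) (Set.mem_univ y)
      (show (0:ℝ) ≤ 1 - b by linarith) hb.le (show (1 - b) + b = 1 by ring)
    have h3 := hmin ((1 - b) • x₀ + b • y)
    have := h3.trans h2
    simp only [smul_eq_mul] at this
    have h4 : b * L x₀ + m / 2 * (1 - b) * b * ‖x₀ - y‖ ^ 2 ≤ b * L y := by nlinarith
    nlinarith
  have hnorm : ‖x₀ - y‖ ^ 2 = ‖y - x₀‖ ^ 2 := by rw [norm_sub_rev]
  rw [← hnorm]
  refine le_of_forall_pos_le_add fun ε hε => ?_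
  set c := m / 2 * ‖x₀ - y‖ ^ 2 with hc
  have hc0 : 0 ≤ c := by positivity
  set b : ℝ := min 1 (ε / (c + 1)) with hbdef
  have hb0 : 0 < b := lt_min one_pos (by positivity)
  have hb1 : b ≤ 1 := min_le_left _ _
  have h5 := key b hb0 hb1
  have hbc : b * c ≤ ε := by
    calc b * c ≤ (ε / (c + 1)) * c := by
          apply mul_le_mul_of_nonneg_right (min_le_right _ _) hc0
      _ ≤ ε := by
          rw [div_mul_eq_mul_div, div_le_iff₀ (by positivity)]
          nlinarith
  have : m / 2 * (1 - b) * ‖x₀ - y‖ ^ 2 = c - b * c := by rw [hc]; ring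
  linarith [h5, this ▸ h5]

theorem stmt3 {p d m : ℕ} (μf lh : ℝ) (hμf : 0 < μf) (hlh : 0 ≤ lh)
    (F : EuclideanSpace ℝ (Fin p) → ℝ)
    (hF : ConvexOn ℝ Set.univ (fun x => F x - μf / 2 * ‖x‖ ^ 2))
    (B : EuclideanSpace ℝ (Fin p) →L[ℝ] EuclideanSpace ℝ (Fin d))
    (h : EuclideanSpace ℝ (Fin p) → EuclideanSpace ℝ (Fin m))
    (hconv : ∀ j, ConvexOn ℝ Set.univ (fun x => h x j))
    (hlip : LipschitzWith (Real.toNNReal lh) h)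
    (μ₁ μ₂ : EuclideanSpace ℝ (Fin d)) (δ₁ δ₂ : EuclideanSpace ℝ (Fin m))
    (hδ₁ : ∀ j, 0 ≤ δ₁ j) (hδ₂ : ∀ j, 0 ≤ δ₂ j)
    (x₁ x₂ : EuclideanSpace ℝ (Fin p))
    (hx₁ : ∀ x, F x₁ + ⟪μ₁, B x₁⟫ + ⟪δ₁, h x₁⟫ ≤ F x + ⟪μ₁, B x⟫ + ⟪δ₁, h x⟫)
    (hx₂ : ∀ x, F x₂ + ⟪μ₂, B x₂⟫ + ⟪δ₂, h x₂⟫ ≤ F x + ⟪μ₂, B x⟫ + ⟪δ₂, h x⟫) :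
    ‖B x₁ - B x₂‖ ^ 2 + ‖h x₁ - h x₂‖ ^ 2 ≤
      2 / μf ^ 2 * (‖B‖ ^ 2 + lh ^ 2) * max (‖B‖ ^ 2) (lh ^ 2) *
        (‖μ₁ - μ₂‖ ^ 2 + ‖δ₁ - δ₂‖ ^ 2) := by
  -- convexity of x ↦ ⟪δ, h x⟫ for δ ≥ 0
  have hinner_conv : ∀ (δ : EuclideanSpace ℝ (Fin m)), (∀ j, 0 ≤ δ j) →
      ConvexOn ℝ Set.univ (fun x => ⟪δ, h x⟫) := by
    intro δ hδ
    have : (fun x => ⟪δ, h x⟫) = fun x => ∑ j, δ j * h x j := by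
      funext x
      simp [PiLp.inner_apply, RCLike.inner_apply, conj_trivial, mul_comm]
    rw [this]
    exact convexOn_finset_sum _ _ fun j _ => (hconv j).smul (hδ j)
  -- convexity of linear part
  have hlin_conv : ∀ (μ : EuclideanSpace ℝ (Fin d)),
      ConvexOn ℝ Set.univ (fun x => ⟪μ, B x⟫) := by
    intro μ
    exact ((innerSL ℝ μ).comp B).toLinearMap.convexOn convex_univ
  -- strong convexity of both Lagrangians
  have hL : ∀ (μ : EuclideanSpace ℝ (Fin d)) (δ : EuclideanSpace ℝ (Fin m)), (∀ j, 0 ≤ δ j) →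
      ConvexOn ℝ Set.univ
        (fun x => (F x + ⟪μ, B x⟫ + ⟪δ, h x⟫) - μf / 2 * ‖x‖ ^ 2) := by
    intro μ δ hδ
    have h0 := (hF.add (hlin_conv μ)).add (hinner_conv δ hδ)
    have heq : (fun x => (F x + ⟪μ, B x⟫ + ⟪δ, h x⟫) - μf / 2 * ‖x‖ ^ 2) =
        ((fun x => F x - μf / 2 * ‖x‖ ^ 2) + fun x => ⟪μ, B x⟫) + fun x => ⟪δ, h x⟫ := by
      funext x
      simp only [Pi.add_apply]
      ring
    rw [heq]
    exact h0
  have key₁ := strong_min hμf (hL μ₁ δ₁ hδ₁) hx₁ x₂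
  have key₂ := strong_min hμf (hL μ₂ δ₂ hδ₂) hx₂ x₁
  -- combine
  have hsum : μf * ‖x₁ - x₂‖ ^ 2 ≤
      ⟪μ₁ - μ₂, B x₂ - B x₁⟫ + ⟪δ₁ - δ₂, h x₂ - h x₁⟫ := by
    have hrev : ‖x₁ - x₂‖ ^ 2 = ‖x₂ - x₁‖ ^ 2 := by rw [norm_sub_rev]
    rw [inner_sub_left, inner_sub_left, inner_sub_right, inner_sub_right,
      inner_sub_right, inner_sub_right]
    nlinarith [key₁, key₂]
  -- bound the RHS
  have hB : ‖B x₂ - B x₁‖ ≤ ‖B‖ * ‖x₁ - x₂‖ := by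
    rw [← map_sub, norm_sub_rev x₂ x₁] at *
    calc ‖B (x₂ - x₁)‖ ≤ ‖B‖ * ‖x₂ - x₁‖ := B.le_opNorm _
      _ = ‖B‖ * ‖x₁ - x₂‖ := by rw [norm_sub_rev]
  have hh : ‖h x₂ - h x₁‖ ≤ lh * ‖x₁ - x₂‖ := by
    have := hlip.dist_le_mul x₂ x₁
    rw [dist_eq_norm, dist_eq_norm] at this
    calc ‖h x₂ - h x₁‖ ≤ Real.toNNReal lh * ‖x₂ - x₁‖ := this
      _ = lh * ‖x₁ - x₂‖ := by
          rw [Real.coe_toNNReal _ hlh, norm_sub_rev]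
  have hineq : μf * ‖x₁ - x₂‖ ^ 2 ≤
      (‖B‖ * ‖μ₁ - μ₂‖ + lh * ‖δ₁ - δ₂‖) * ‖x₁ - x₂‖ := by
    have c1 : ⟪μ₁ - μ₂, B x₂ - B x₁⟫ ≤ ‖μ₁ - μ₂‖ * ‖B x₂ - B x₁‖ :=
      real_inner_le_norm _ _
    have c2 : ⟪δ₁ - δ₂, h x₂ - h x₁⟫ ≤ ‖δ₁ - δ₂‖ * ‖h x₂ - h x₁‖ :=
      real_inner_le_norm _ _
    nlinarith [norm_nonneg (μ₁ - μ₂), norm_nonneg (δ₁ - δ₂), norm_nonneg (B x₂ - B x₁),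
      norm_nonneg (h x₂ - h x₁)]
  have hstab : μf * ‖x₁ - x₂‖ ≤ ‖B‖ * ‖μ₁ - μ₂‖ + lh * ‖δ₁ - δ₂‖ := by
    rcases eq_or_lt_of_le (norm_nonneg (x₁ - x₂)) with h0 | h0
    · rw [← h0]
      have : 0 ≤ ‖B‖ * ‖μ₁ - μ₂‖ + lh * ‖δ₁ - δ₂‖ := by positivity
      linarith
    · have := hineq
      nlinarith
  -- final algebra
  have hBn : 0 ≤ ‖B‖ := norm_nonneg _
  have hμn : 0 ≤ ‖μ₁ - μ₂‖ := norm_nonneg _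
  have hδn : 0 ≤ ‖δ₁ - δ₂‖ := norm_nonneg _
  have hxn : 0 ≤ ‖x₁ - x₂‖ := norm_nonneg _
  set M := max (‖B‖ ^ 2) (lh ^ 2) with hM
  have hBM : ‖B‖ ^ 2 ≤ M := le_max_left _ _
  have hlM : lh ^ 2 ≤ M := le_max_right _ _
  have hM0 : 0 ≤ M := le_trans (by positivity) hBM
  -- ‖Bx₁-Bx₂‖² + ‖hx₁-hx₂‖² ≤ (‖B‖²+lh²)‖x₁-x₂‖²
  have lhs_bound : ‖B x₁ - B x₂‖ ^ 2 + ‖h x₁ - h x₂‖ ^ 2 ≤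
      (‖B‖ ^ 2 + lh ^ 2) * ‖x₁ - x₂‖ ^ 2 := by
    have b1 : ‖B x₁ - B x₂‖ ≤ ‖B‖ * ‖x₁ - x₂‖ := by
      rw [norm_sub_rev]; exact hB
    have b2 : ‖h x₁ - h x₂‖ ≤ lh * ‖x₁ - x₂‖ := by
      rw [norm_sub_rev]; exact hh
    nlinarith [norm_nonneg (B x₁ - B x₂), norm_nonneg (h x₁ - h x₂)]
  -- μf²‖x₁-x₂‖² ≤ (‖B‖‖Δμ‖+lh‖Δδ‖)² ≤ 2M(‖Δμ‖²+‖Δδ‖²)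
  have C2 : μf ^ 2 * ‖x₁ - x₂‖ ^ 2 ≤ 2 * M * (‖μ₁ - μ₂‖ ^ 2 + ‖δ₁ - δ₂‖ ^ 2) := by
    have sq : (μf * ‖x₁ - x₂‖) ^ 2 ≤ (‖B‖ * ‖μ₁ - μ₂‖ + lh * ‖δ₁ - δ₂‖) ^ 2 := by
      apply sq_le_sq' _ hstab
      nlinarith
    have h1 : 0 ≤ (M - ‖B‖ ^ 2) * ‖μ₁ - μ₂‖ ^ 2 :=
      mul_nonneg (by linarith) (sq_nonneg _)
    have h2 : 0 ≤ (M - lh ^ 2) * ‖δ₁ - δ₂‖ ^ 2 :=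
      mul_nonneg (by linarith) (sq_nonneg _)
    have h3 : 0 ≤ (M - ‖B‖ ^ 2) * ‖δ₁ - δ₂‖ ^ 2 :=
      mul_nonneg (by linarith) (sq_nonneg _)
    have h4 : 0 ≤ (M - lh ^ 2) * ‖μ₁ - μ₂‖ ^ 2 :=
      mul_nonneg (by linarith) (sq_nonneg _)
    nlinarith [sq, sq_nonneg (‖B‖ * ‖δ₁ - δ₂‖ - lh * ‖μ₁ - μ₂‖)]
    -- (a c + b d)^2 ≤ 2 max(a²,b²)(c²+d²)
  have hx2 : ‖x₁ - x₂‖ ^ 2 ≤ 2 * M * (‖μ₁ - μ₂‖ ^ 2 + ‖δ₁ - δ₂‖ ^ 2) / μf ^ 2 := by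
    rw [le_div_iff₀ (by positivity)]
    nlinarith
  calc ‖B x₁ - B x₂‖ ^ 2 + ‖h x₁ - h x₂‖ ^ 2
      ≤ (‖B‖ ^ 2 + lh ^ 2) * ‖x₁ - x₂‖ ^ 2 := lhs_bound
    _ ≤ (‖B‖ ^ 2 + lh ^ 2) * (2 * M * (‖μ₁ - μ₂‖ ^ 2 + ‖δ₁ - δ₂‖ ^ 2) / μf ^ 2) := by
        apply mul_le_mul_of_nonneg_left hx2 (by positivity)
    _ = 2 / μf ^ 2 * (‖B‖ ^ 2 + lh ^ 2) * M * (‖μ₁ - μ₂‖ ^ 2 + ‖δ₁ - δ₂‖ ^ 2) := by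
        ring
end

section
/- Dual-update identity: if λ_{k+1} = λ_k - βWy_{k+1} with β ≠ 0, W symmetric PSD, and y_{k+1} - y* lies in the range of W, and Wy* = 0, then ⟨λ_{k+1} - λ, y_{k+1} - y*⟩ = (1/(2β))(‖λ_k - λ‖²_{W†} - ‖λ_{k+1} - λ‖²_{W†} - ‖λ_k - λ_{k+1}‖²_{W†}) for any λ in the range of W. -/
open Matrix

lemma key_pinv {n : ℕ} (W Wd : Matrix (Fin n) (Fin n) ℝ) (hWs : Wᵀ = W)
    (hd1 : W * Wd * W = W) (u v : Fin n → ℝ) :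
    W.mulVec u ⬝ᵥ Wd.mulVec (W.mulVec v) = u ⬝ᵥ W.mulVec v := by
  rw [mulVec_mulVec, ← hWs, mulVec_transpose, dotProduct_mulVec,
    vecMul_vecMul, hWs, ← Matrix.mul_assoc, hd1, ← dotProduct_mulVec]

lemma sym_dot {n : ℕ} (W : Matrix (Fin n) (Fin n) ℝ) (hWs : Wᵀ = W) (u v : Fin n → ℝ) :
    u ⬝ᵥ W.mulVec v = v ⬝ᵥ W.mulVec u := by
  rw [dotProduct_mulVec, ← mulVec_transpose, hWs, dotProduct_comm]

theorem stmt10 {n : ℕ} (W Wd : Matrix (Fin n) (Fin n) ℝ) (hW : W.PosSemidef)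
    (hd1 : W * Wd * W = W) (hd2 : Wd * W * Wd = Wd)
    (hd3 : (W * Wd)ᵀ = W * Wd) (hd4 : (Wd * W)ᵀ = Wd * W)
    (β : ℝ) (hβ : 0 < β)
    (yk1 ys lamk lamk1 lam : Fin n → ℝ)
    (hys : W.mulVec ys = 0)
    (hupd : lamk1 = lamk - β • W.mulVec yk1)
    (hy : yk1 - ys ∈ LinearMap.range W.mulVecLin)
    (hlamk : lamk ∈ LinearMap.range W.mulVecLin)
    (hlamk1 : lamk1 ∈ LinearMap.range W.mulVecLin)
    (hlam : lam ∈ LinearMap.range W.mulVecLin) :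
    (lamk1 - lam) ⬝ᵥ (yk1 - ys) =
      1 / (2 * β) * ((lamk - lam) ⬝ᵥ Wd.mulVec (lamk - lam)
        - (lamk1 - lam) ⬝ᵥ Wd.mulVec (lamk1 - lam)
        - (lamk - lamk1) ⬝ᵥ Wd.mulVec (lamk - lamk1)) := by
  have hWs : Wᵀ = W := by have h : W.IsSymm := by simpa using hW.isHermitian
                          exact h
  obtain ⟨ua, hua⟩ := sub_mem hlamk hlam
  obtain ⟨ub, hub⟩ := sub_mem hlamk1 hlam
  obtain ⟨z, hz⟩ := hy
  rw [mulVecLin_apply] at hua hub hz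
  -- lamk - lamk1 = W (ua - ub)
  have hsub : lamk - lamk1 = W.mulVec (ua - ub) := by
    rw [mulVec_sub, hua, hub]; abel
  -- lamk - lamk1 = β • W (W z)
  have hyk1 : yk1 = W.mulVec z + ys := by rw [hz]; abel
  have hc : W.mulVec (ua - ub) = β • W.mulVec (W.mulVec z) := by
    rw [← hsub, hupd, sub_sub_cancel, hyk1, mulVec_add, hys, add_zero]
  -- the three quadratic terms
  have e1 : (lamk - lam) ⬝ᵥ Wd.mulVec (lamk - lam) = ua ⬝ᵥ W.mulVec ua := by
    rw [← hua, key_pinv W Wd hWs hd1]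
  have e2 : (lamk1 - lam) ⬝ᵥ Wd.mulVec (lamk1 - lam) = ub ⬝ᵥ W.mulVec ub := by
    rw [← hub, key_pinv W Wd hWs hd1]
  have e3 : (lamk - lamk1) ⬝ᵥ Wd.mulVec (lamk - lamk1)
      = (ua - ub) ⬝ᵥ W.mulVec (ua - ub) := by
    rw [hsub, key_pinv W Wd hWs hd1]
  -- LHS
  have eL : (lamk1 - lam) ⬝ᵥ (yk1 - ys) = ub ⬝ᵥ W.mulVec (W.mulVec z) := by
    rw [← hub, ← hz, dotProduct_comm]
    exact sym_dot W hWs (W.mulVec z) ub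
  rw [e1, e2, e3, eL]
  have hCB : ub ⬝ᵥ W.mulVec (ua - ub) = β * (ub ⬝ᵥ W.mulVec (W.mulVec z)) := by
    rw [hc, dotProduct_smul]; rfl
  have hsymm : ua ⬝ᵥ W.mulVec ub = ub ⬝ᵥ W.mulVec ua := sym_dot W hWs ua ub
  have expand : (ua - ub) ⬝ᵥ W.mulVec (ua - ub)
      = ua ⬝ᵥ W.mulVec ua - ua ⬝ᵥ W.mulVec ub - ub ⬝ᵥ W.mulVec ua + ub ⬝ᵥ W.mulVec ub := by
    rw [mulVec_sub, sub_dotProduct, dotProduct_sub, dotProduct_sub]; ring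
  have hCB' : ub ⬝ᵥ W.mulVec ua - ub ⬝ᵥ W.mulVec ub = β * (ub ⬝ᵥ W.mulVec (W.mulVec z)) := by
    rw [← hCB, mulVec_sub, dotProduct_sub]
  have hβ' : β ≠ 0 := ne_of_gt hβ
  rw [expand]
  simp only [mulVec_mulVec] at hCB' ⊢
  field_simp
  linarith [hCB', hsymm]
end

section
/- For a convex l-smooth function G and points y_k, y_{k+1}, ŷ_k, ŷ_{k+1}, ỹ_k satisfying ỹ_k = (1-α)ŷ_k + α y_k and ŷ_{k+1} = (1-α)ŷ_k + α y_{k+1} with α ∈ [0,1], one has G(ŷ_{k+1}) ≤ (1-α)G(ŷ_k) + αG(y*) + α⟨∇G(ỹ_k), y_{k+1} - y*⟩ + (α²l/2)‖y_{k+1} - y_k‖² for any point y*. -/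
open RealInnerProductSpace

private lemma myLineDeriv {n : ℕ} (G : EuclideanSpace ℝ (Fin n) → ℝ)
    (G' : EuclideanSpace ℝ (Fin n) → EuclideanSpace ℝ (Fin n))
    (hgrad : ∀ x, HasGradientAt G (G' x) x)
    (x d : EuclideanSpace ℝ (Fin n)) (t : ℝ) :
    HasDerivAt (fun t : ℝ => G (x + t • d)) ⟪G' (x + t • d), d⟫ t := by
  have h1 : HasDerivAt (fun t : ℝ => x + t • d) d t := by
    simpa using ((hasDerivAt_id t).smul_const d).const_add x
  have h2 := (hgrad (x + t • d)).hasFDerivAt.comp_hasDerivAt t h1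
  exact h2

private lemma conv_first {n : ℕ} (G : EuclideanSpace ℝ (Fin n) → ℝ)
    (G' : EuclideanSpace ℝ (Fin n) → EuclideanSpace ℝ (Fin n))
    (hconv : ConvexOn ℝ Set.univ G)
    (hgrad : ∀ x, HasGradientAt G (G' x) x)
    (x z : EuclideanSpace ℝ (Fin n)) :
    G x + ⟪G' x, z - x⟫ ≤ G z := by
  set d := z - x with hd
  have hder : HasDerivAt (fun t : ℝ => G (x + t • d)) ⟪G' x, d⟫ 0 := by
    simpa using myLineDeriv G G' hgrad x d 0
  have hslope : Filter.Tendsto (slope (fun t : ℝ => G (x + t • d)) 0) (nhdsWithin 0 (Set.Ioi 0))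
      (nhds ⟪G' x, d⟫) :=
    (hasDerivAt_iff_tendsto_slope.1 hder).mono_left
      (nhdsWithin_mono 0 (fun t ht => ne_of_gt ht))
  have hle : ⟪G' x, d⟫ ≤ G z - G x := by
    refine le_of_tendsto hslope ?_
    filter_upwards [Ioc_mem_nhdsGT one_pos] with t ht
    have hcv := hconv.2 (Set.mem_univ x) (Set.mem_univ z) (by linarith [ht.2] : (0:ℝ) ≤ 1 - t)
      (le_of_lt ht.1) (by ring)
    have hline : (1 - t) • x + t • z = x + t • d := by rw [hd]; module
    rw [hline, smul_eq_mul, smul_eq_mul] at hcv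
    have h0 : G (x + (0:ℝ) • d) = G x := by norm_num
    rw [slope_def_field, h0, sub_zero, div_le_iff₀ ht.1]
    nlinarith [hcv]
  linarith

private lemma descent {n : ℕ} (G : EuclideanSpace ℝ (Fin n) → ℝ)
    (G' : EuclideanSpace ℝ (Fin n) → EuclideanSpace ℝ (Fin n))
    (hgrad : ∀ x, HasGradientAt G (G' x) x)
    (l : ℝ) (hl : 0 ≤ l) (hlip : LipschitzWith (Real.toNNReal l) G')
    (x z : EuclideanSpace ℝ (Fin n)) :
    G z ≤ G x + ⟪G' x, z - x⟫ + l / 2 * ‖z - x‖ ^ 2 := by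
  set d := z - x with hd
  set φ : ℝ → ℝ := fun t => G (x + t • d) - t * ⟪G' x, d⟫ - l * t ^ 2 / 2 * ‖d‖ ^ 2 with hφ
  have hφ' : ∀ t : ℝ, HasDerivAt φ (⟪G' (x + t • d), d⟫ - ⟪G' x, d⟫ - l * t * ‖d‖ ^ 2) t := by
    intro t
    have h1 := myLineDeriv G G' hgrad x d t
    have h2 : HasDerivAt (fun t : ℝ => t * ⟪G' x, d⟫) ⟪G' x, d⟫ t := by
      simpa using (hasDerivAt_id t).mul_const ⟪G' x, d⟫
    have h3 : HasDerivAt (fun t : ℝ => l * t ^ 2 / 2 * ‖d‖ ^ 2) (l * t * ‖d‖ ^ 2) t := by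
      have := ((hasDerivAt_pow 2 t).const_mul l).div_const 2 |>.mul_const (‖d‖ ^ 2)
      refine this.congr_deriv ?_
      ring
    exact (h1.sub h2).sub h3
  have hanti : AntitoneOn φ (Set.Icc 0 1) := by
    apply antitoneOn_of_deriv_nonpos (convex_Icc 0 1)
    · have hdiff : Differentiable ℝ φ := fun t => (hφ' t).differentiableAt
      exact hdiff.continuous.continuousOn
    · intro t ht
      exact (hφ' t).differentiableAt.differentiableWithinAt
    · intro t ht
      rw [interior_Icc] at ht
      rw [(hφ' t).deriv]
      have hcs : ⟪G' (x + t • d) - G' x, d⟫ ≤ ‖G' (x + t • d) - G' x‖ * ‖d‖ :=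
        real_inner_le_norm _ _
      have hlipb : ‖G' (x + t • d) - G' x‖ ≤ l * (t * ‖d‖) := by
        have := hlip.dist_le_mul (x + t • d) x
        rw [dist_eq_norm, dist_eq_norm] at this
        simp only [add_sub_cancel_left] at this
        calc ‖G' (x + t • d) - G' x‖ ≤ l.toNNReal * ‖t • d‖ := this
          _ = l * (t * ‖d‖) := by
              rw [norm_smul, Real.norm_eq_abs, abs_of_pos ht.1, Real.coe_toNNReal l hl]
      have hinner : ⟪G' (x + t • d) - G' x, d⟫ = ⟪G' (x + t • d), d⟫ - ⟪G' x, d⟫ :=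
        inner_sub_left _ _ _
      nlinarith [norm_nonneg d, ht.1.le]
  have h01 := hanti (Set.left_mem_Icc.2 zero_le_one) (Set.right_mem_Icc.2 zero_le_one) zero_le_one
  have he0 : φ 0 = G x := by simp [hφ]
  have he1 : φ 1 = G z - ⟪G' x, d⟫ - l / 2 * ‖d‖ ^ 2 := by
    have hz : x + (1:ℝ) • d = z := by rw [hd]; module
    simp only [hφ, hz, one_pow, one_mul]
    ring
  rw [he0, he1] at h01
  linarith

theorem stmt12 {n : ℕ} (G : EuclideanSpace ℝ (Fin n) → ℝ)
    (G' : EuclideanSpace ℝ (Fin n) → EuclideanSpace ℝ (Fin n))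
    (hconv : ConvexOn ℝ Set.univ G)
    (hgrad : ∀ x, HasGradientAt G (G' x) x)
    (l : ℝ) (hl : 0 ≤ l) (hlip : LipschitzWith (Real.toNNReal l) G')
    (α : ℝ) (hα : α ∈ Set.Icc (0 : ℝ) 1)
    (yk yk1 yhk ys : EuclideanSpace ℝ (Fin n)) :
    G ((1 - α) • yhk + α • yk1) ≤ (1 - α) * G yhk + α * G ys
      + α * ⟪G' ((1 - α) • yhk + α • yk), yk1 - ys⟫
      + α ^ 2 * l / 2 * ‖yk1 - yk‖ ^ 2 := by
  obtain ⟨hα0, hα1⟩ := hα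
  set t := (1 - α) • yhk + α • yk with hti
  set s := (1 - α) • yhk + α • yk1 with hsi
  have hst : s - t = α • (yk1 - yk) := by rw [hsi, hti]; module
  have hd := descent G G' hgrad l hl hlip t s
  rw [hst] at hd
  have hnorm : ‖α • (yk1 - yk)‖ ^ 2 = α ^ 2 * ‖yk1 - yk‖ ^ 2 := by
    rw [norm_smul, Real.norm_eq_abs, mul_pow, sq_abs]
  rw [hnorm, real_inner_smul_right] at hd
  have hc1 := conv_first G G' hconv hgrad t yhk
  have hc2 := conv_first G G' hconv hgrad t ys
  have e1 : yhk - t = α • (yhk - yk) := by rw [hti]; module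
  rw [e1, real_inner_smul_right] at hc1
  have h1 := mul_le_mul_of_nonneg_left hc1 (by linarith : (0:ℝ) ≤ 1 - α)
  have h2 := mul_le_mul_of_nonneg_left hc2 hα0
  have ei : (1 - α) * (α * ⟪G' t, yhk - yk⟫) + α * ⟪G' t, ys - t⟫
      = α * ⟪G' t, ys - yk⟫ := by
    rw [hti]
    simp only [inner_sub_right, inner_add_right, real_inner_smul_right]
    ring
  have ef : α * ⟪G' t, yk1 - yk⟫ - α * ⟪G' t, ys - yk⟫ = α * ⟪G' t, yk1 - ys⟫ := by
    simp only [inner_sub_right]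
    ring
  nlinarith [h1, h2, hd]
end

section
/- Primal optimality upper bound via dual smoothness: if G is convex with l_g-Lipschitz gradient, F(x) := -G(y) + ⟨∇G(y), y⟩ defines the primal value at the dual point y (Fenchel-type relation), then F evaluated at ŷ satisfies F(ŷ) - F(y*) = -G(ŷ) + G(y*) + ⟨∇G(ŷ), ŷ⟩ - ⟨∇G(y*), y*⟩ ≤ l_g‖y*‖·‖ŷ - y*‖ + l_g‖ŷ - y*‖². -/
open RealInnerProductSpace

lemma subgrad_ineq {n : ℕ} (G : EuclideanSpace ℝ (Fin n) → ℝ)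
    (hconv : ConvexOn ℝ Set.univ G) {g y : EuclideanSpace ℝ (Fin n)}
    (hg : HasGradientAt G g y) (x : EuclideanSpace ℝ (Fin n)) :
    ⟪g, x - y⟫ ≤ G x - G y := by
  set φ : ℝ → ℝ := fun t => G (y + t • (x - y)) with hφ
  have hline : HasDerivAt (fun t : ℝ => y + t • (x - y)) (x - y) 0 := by
    simpa using ((hasDerivAt_id (0:ℝ)).smul_const (x - y)).const_add y
  have hd : HasDerivAt φ ⟪g, x - y⟫ 0 := by
    have hfd := hg.hasFDerivAt
    rw [show y = y + (0:ℝ) • (x - y) by simp] at hfd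
    have := hfd.comp_hasDerivAt 0 hline
    exact (by simpa using this : HasDerivAt (G ∘ fun t : ℝ => y + t • (x - y)) ⟪g, x - y⟫ 0)
  have hslope : Filter.Tendsto (slope φ 0) (nhdsWithin 0 (Set.Ioi 0))
      (nhds ⟪g, x - y⟫) := by
    have := hasDerivAt_iff_tendsto_slope.1 hd
    exact this.mono_left (nhdsWithin_mono _ (by intro t ht; exact ne_of_gt ht))
  have hbound : ∀ᶠ t in nhdsWithin (0:ℝ) (Set.Ioi 0), slope φ 0 t ≤ G x - G y := by
    filter_upwards [Ioo_mem_nhdsGT_of_mem (Set.left_mem_Ico.2 one_pos)] with t ht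
    have key : y + t • (x - y) = (1 - t) • y + t • x := by
      rw [smul_sub, sub_smul, one_smul]; abel
    have h1 : φ t ≤ (1 - t) * G y + t * G x := by
      rw [hφ]; dsimp only; rw [key]
      exact hconv.2 (Set.mem_univ y) (Set.mem_univ x)
        (by linarith [ht.2] : (0:ℝ) ≤ 1 - t) (le_of_lt ht.1) (by ring)
    have hφ0 : φ 0 = G y := by simp [hφ]
    simp only [slope_def_field, sub_zero]
    rw [div_le_iff₀ ht.1, hφ0]
    nlinarith [ht.1]
  have := le_of_tendsto hslope hbound
  linarith

theorem stmt15 {n : ℕ} (G : EuclideanSpace ℝ (Fin n) → ℝ)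
    (G' : EuclideanSpace ℝ (Fin n) → EuclideanSpace ℝ (Fin n))
    (hconv : ConvexOn ℝ Set.univ G)
    (hgrad : ∀ x, HasGradientAt G (G' x) x)
    (lg : ℝ) (hlg : 0 ≤ lg) (hlip : LipschitzWith (Real.toNNReal lg) G')
    (yh ys : EuclideanSpace ℝ (Fin n)) :
    (-G yh + ⟪G' yh, yh⟫) - (-G ys + ⟪G' ys, ys⟫) ≤
      lg * ‖ys‖ * ‖yh - ys‖ + lg * ‖yh - ys‖ ^ 2 := by
  have hsub : ⟪G' ys, yh - ys⟫ ≤ G yh - G ys := subgrad_ineq G hconv (hgrad ys) yh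
  have hlipn : ‖G' yh - G' ys‖ ≤ lg * ‖yh - ys‖ := by
    have := hlip.dist_le_mul yh ys
    simpa [dist_eq_norm, Real.coe_toNNReal lg hlg] using this
  have hcs1 : ⟪G' yh - G' ys, yh - ys⟫ ≤ lg * ‖yh - ys‖ ^ 2 := by
    calc ⟪G' yh - G' ys, yh - ys⟫ ≤ ‖G' yh - G' ys‖ * ‖yh - ys‖ :=
          real_inner_le_norm _ _
      _ ≤ lg * ‖yh - ys‖ * ‖yh - ys‖ :=
          mul_le_mul_of_nonneg_right hlipn (norm_nonneg _)
      _ = lg * ‖yh - ys‖ ^ 2 := by ring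
  have hcs2 : ⟪G' yh - G' ys, ys⟫ ≤ lg * ‖ys‖ * ‖yh - ys‖ := by
    calc ⟪G' yh - G' ys, ys⟫ ≤ ‖G' yh - G' ys‖ * ‖ys‖ := real_inner_le_norm _ _
      _ ≤ lg * ‖yh - ys‖ * ‖ys‖ := mul_le_mul_of_nonneg_right hlipn (norm_nonneg _)
      _ = lg * ‖ys‖ * ‖yh - ys‖ := by ring
  have hexp : (-G yh + ⟪G' yh, yh⟫) - (-G ys + ⟪G' ys, ys⟫) =
      ⟪G' yh - G' ys, yh - ys⟫ + ⟪G' yh - G' ys, ys⟫ + ⟪G' ys, yh - ys⟫ +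
        (G ys - G yh) := by
    simp only [inner_sub_left, inner_sub_right]
    ring
  rw [hexp]
  linarith
end
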